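/- Equivalence of BLasso and nuclear-norm regularization for discrete measures: let Φ(μ) = (1/2)‖y − A(D(μ))‖² + λ‖μ‖_TV over finitely supported signed measures μ = ∑ℓ cℓ δ_{θℓ} on Θ = S^{n₁−1}×S^{n₂−1}×S^{n₃−1}, where D(μ) = ∑ℓ cℓ uℓ⊗vℓ⊗wℓ, and let F(X) = (1/2)‖y − A(X)‖² + λ‖X‖_*. Then inf_μ Φ(μ) = min_X F(X); moreover any minimizer μ* of Φ yields a minimizer X* = D(μ*) of F, and any minimizer X* of F is represented by some finitely supported minimizer μ* of Φ. -/

import Mathlib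

open scoped RealInnerProductSpace
noncomputable section

/-- The space of `n₁ × n₂ × n₃` real tensors with the Frobenius (Euclidean) norm. -/
abbrev Tensor (n₁ n₂ n₃ : ℕ) := EuclideanSpace ℝ (Fin n₁ × Fin n₂ × Fin n₃)

/-- Rank-one tensor `u ⊗ v ⊗ w`. -/
def rk1 {n₁ n₂ n₃ : ℕ} (u : EuclideanSpace ℝ (Fin n₁)) (v : EuclideanSpace ℝ (Fin n₂))
    (w : EuclideanSpace ℝ (Fin n₃)) : Tensor n₁ n₂ n₃ :=
  WithLp.toLp 2 (fun p : Fin n₁ × Fin n₂ × Fin n₃ => u p.1 * v p.2.1 * w p.2.2)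

/-- Values `∑ℓ |cℓ|` over finite decompositions of `X` into scaled unit rank-one tensors. -/
def nuclearSet {n₁ n₂ n₃ : ℕ} (X : Tensor n₁ n₂ n₃) : Set ℝ :=
  { s | ∃ (r : ℕ) (c : Fin r → ℝ) (u : Fin r → EuclideanSpace ℝ (Fin n₁))
        (v : Fin r → EuclideanSpace ℝ (Fin n₂)) (w : Fin r → EuclideanSpace ℝ (Fin n₃)),
      (∀ ℓ, ‖u ℓ‖ = 1) ∧ (∀ ℓ, ‖v ℓ‖ = 1) ∧ (∀ ℓ, ‖w ℓ‖ = 1) ∧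
      X = ∑ ℓ, c ℓ • rk1 (u ℓ) (v ℓ) (w ℓ) ∧ s = ∑ ℓ, |c ℓ| }

/-- Tensor nuclear norm. -/
def nuclearNorm {n₁ n₂ n₃ : ℕ} (X : Tensor n₁ n₂ n₃) : ℝ := sInf (nuclearSet X)

variable {n₁ n₂ n₃ m : ℕ}

/-- Nuclear-norm regularized objective `F(X) = (1/2)‖y − A(X)‖² + λ‖X‖_*`. -/
def Fobj (A : Tensor n₁ n₂ n₃ →ₗ[ℝ] EuclideanSpace ℝ (Fin m))
    (y : EuclideanSpace ℝ (Fin m)) (lam : ℝ) (X : Tensor n₁ n₂ n₃) : ℝ :=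
  (1 / 2) * ‖y - A X‖ ^ 2 + lam * nuclearNorm X

/-- BLasso objective value `Φ(μ) = (1/2)‖y − A(D(μ))‖² + λ‖μ‖_TV` of a finitely
supported signed measure `μ = ∑ℓ cℓ δ_{(uℓ,vℓ,wℓ)}` (with distinct unit-norm atoms). -/
def PhiVal (A : Tensor n₁ n₂ n₃ →ₗ[ℝ] EuclideanSpace ℝ (Fin m))
    (y : EuclideanSpace ℝ (Fin m)) (lam : ℝ) {r : ℕ} (c : Fin r → ℝ)
    (u : Fin r → EuclideanSpace ℝ (Fin n₁)) (v : Fin r → EuclideanSpace ℝ (Fin n₂))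
    (w : Fin r → EuclideanSpace ℝ (Fin n₃)) : ℝ :=
  (1 / 2) * ‖y - A (∑ ℓ, c ℓ • rk1 (u ℓ) (v ℓ) (w ℓ))‖ ^ 2 + lam * ∑ ℓ, |c ℓ|

/-- Set of BLasso objective values over all finitely supported measures. -/
def PhiSet (A : Tensor n₁ n₂ n₃ →ₗ[ℝ] EuclideanSpace ℝ (Fin m))
    (y : EuclideanSpace ℝ (Fin m)) (lam : ℝ) : Set ℝ :=
  { t | ∃ (r : ℕ) (c : Fin r → ℝ) (u : Fin r → EuclideanSpace ℝ (Fin n₁))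
      (v : Fin r → EuclideanSpace ℝ (Fin n₂)) (w : Fin r → EuclideanSpace ℝ (Fin n₃)),
      (∀ ℓ, ‖u ℓ‖ = 1) ∧ (∀ ℓ, ‖v ℓ‖ = 1) ∧ (∀ ℓ, ‖w ℓ‖ = 1) ∧
      (Function.Injective fun ℓ => (u ℓ, v ℓ, w ℓ)) ∧ t = PhiVal A y lam c u v w }

/-!
The unit ball of the nuclear norm is the convex hull of `0` and the unit rank-one tensors. That
hull is compact (Carathéodory), so the infimum defining `‖X‖_*` is attained, and `F` attains its
minimum on the compact set of `s • k` with `0 ≤ s ≤ F(0)/λ` and `k` in the ball. Merging repeated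
atoms of a decomposition does not increase `∑ |cℓ|`. So every `X` equals `D(μ)` for a measure `μ`
with distinct atoms and `Φ(μ) ≤ F(X)`. Since `F(D(μ)) ≤ Φ(μ)` always holds, the two problems have
the same optimal value and their minimizers correspond.
-/

open scoped Pointwise

section ConvexHull

variable {E : Type*} [AddCommGroup E] [Module ℝ E] [FiniteDimensional ℝ E]
  [TopologicalSpace E] [ContinuousAdd E] [ContinuousSMul ℝ E]

theorem isCompact_convexHull {s : Set E} (hs : IsCompact s) : IsCompact (convexHull ℝ s) := by
  have hunion : convexHull ℝ s = ⋃ k ∈ Finset.range (Module.finrank ℝ E + 2),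
      (fun p : (Fin k → ℝ) × (Fin k → E) => ∑ i, p.1 i • p.2 i) ''
        (stdSimplex ℝ (Fin k) ×ˢ Set.univ.pi fun _ => s) := by
    refine subset_antisymm (fun x hx => ?_) (Set.iUnion₂_subset fun k _ => ?_)
    · obtain ⟨ι, _, z, w, hzs, hz, hw0, hw1, rfl⟩ := eq_pos_convex_span_of_mem_convexHull hx
      let e := (Fintype.equivFin ι).symm
      have hcard : Fintype.card ι < Module.finrank ℝ E + 2 :=
        hz.card_le_finrank_succ.trans_lt <| by
          have := Submodule.finrank_le (vectorSpan ℝ (Set.range z))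
          omega
      refine Set.mem_biUnion (Finset.mem_range.2 hcard) ⟨(w ∘ e, z ∘ e), ⟨⟨fun i => (hw0 _).le, ?_⟩,
        fun i _ => hzs ⟨_, rfl⟩⟩, e.sum_comp fun i => w i • z i⟩
      exact (e.sum_comp w).trans hw1
    · rintro _ ⟨p, ⟨hw, hz⟩, rfl⟩
      exact (convex_convexHull ℝ s).sum_mem (fun i _ => hw.1 i) hw.2
        fun i _ => subset_convexHull ℝ s (hz i trivial)
  rw [hunion]
  exact (Finset.range _).isCompact_biUnion fun k _ =>
    ((isCompact_stdSimplex _ _).prod (isCompact_univ_pi fun _ => hs)).image (by fun_prop)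

end ConvexHull

theorem Convex.sum_smul_mem_sum_smul {E ι : Type*} [AddCommGroup E] [Module ℝ E] {K : Set E}
    (hK : Convex ℝ K) (hne : K.Nonempty) (I : Finset ι) {a : ι → ℝ} {z : ι → E}
    (ha : ∀ i ∈ I, 0 ≤ a i) (hz : ∀ i ∈ I, z i ∈ K) :
    ∑ i ∈ I, a i • z i ∈ (∑ i ∈ I, a i) • K := by
  induction I using Finset.cons_induction with
  | empty => simp [Set.zero_smul_set hne]
  | cons i I hi ih =>
    simp only [Finset.mem_cons, forall_eq_or_imp] at ha hz
    rw [Finset.sum_cons, Finset.sum_cons, hK.add_smul ha.1 (Finset.sum_nonneg ha.2)]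
    exact Set.add_mem_add (Set.smul_mem_smul_set hz.1) (ih ha.2 hz.2)

section Merge

variable {Θ M : Type*} [AddCommGroup M] [Module ℝ M]

theorem exists_injective_sum_smul_eq {r : ℕ} (c : Fin r → ℝ) (θ : Fin r → Θ) (φ : Θ → M) :
    ∃ (r' : ℕ) (c' : Fin r' → ℝ) (θ' : Fin r' → Θ), Function.Injective θ' ∧
      (∀ j, θ' j ∈ Set.range θ) ∧ ∑ j, c' j • φ (θ' j) = ∑ ℓ, c ℓ • φ (θ ℓ) ∧
      ∑ j, |c' j| ≤ ∑ ℓ, |c ℓ| := by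
  classical
  set T := Finset.univ.image θ
  let e := T.equivFin.symm
  let fiberSum : Θ → ℝ := fun a => ∑ ℓ with θ ℓ = a, c ℓ
  refine ⟨T.card, fun j => fiberSum (e j), fun j => e j, Subtype.val_injective.comp e.injective,
    fun j => ?_, ?_, ?_⟩
  · obtain ⟨ℓ, -, h⟩ := Finset.mem_image.1 (e j).2
    exact ⟨ℓ, h⟩
  · rw [e.sum_comp fun a => fiberSum a • φ a, T.sum_coe_sort fun a => fiberSum a • φ a]
    refine Finset.sum_image' _ fun ℓ _ => ?_
    rw [Finset.sum_smul]
    exact Finset.sum_congr rfl fun i hi => by rw [(Finset.mem_filter.1 hi).2]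
  · rw [e.sum_comp fun a => |fiberSum a|, T.sum_coe_sort fun a => |fiberSum a|,
      ← Finset.sum_fiberwise_of_maps_to (fun ℓ _ => Finset.mem_image_of_mem θ (Finset.mem_univ ℓ))]
    exact Finset.sum_le_sum fun a _ => Finset.abs_sum_le_sum_abs _ _

end Merge

theorem continuous_rk1 : Continuous fun θ : EuclideanSpace ℝ (Fin n₁) × EuclideanSpace ℝ (Fin n₂) ×
    EuclideanSpace ℝ (Fin n₃) => rk1 θ.1 θ.2.1 θ.2.2 :=
  (PiLp.continuous_toLp 2 _).comp <| continuous_pi fun q => by fun_prop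

theorem rk1_neg_left (u : EuclideanSpace ℝ (Fin n₁)) (v : EuclideanSpace ℝ (Fin n₂))
    (w : EuclideanSpace ℝ (Fin n₃)) : rk1 (-u) v w = -rk1 u v w := by
  ext q
  simp [rk1]

theorem rk1_single (i : Fin n₁) (j : Fin n₂) (k : Fin n₃) :
    rk1 (EuclideanSpace.single i 1) (EuclideanSpace.single j 1) (EuclideanSpace.single k 1) =
      EuclideanSpace.single (i, j, k) (1 : ℝ) := by
  ext ⟨i', j', k'⟩
  simp only [rk1, PiLp.single_apply, Prod.mk.injEq]
  split_ifs <;> simp_all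

theorem nuclearSet_nonneg {X : Tensor n₁ n₂ n₃} {s : ℝ} (hs : s ∈ nuclearSet X) : 0 ≤ s := by
  obtain ⟨r, c, u, v, w, -, -, -, -, rfl⟩ := hs
  positivity

theorem zero_mem_nuclearSet_zero : (0 : ℝ) ∈ nuclearSet (0 : Tensor n₁ n₂ n₃) :=
  ⟨0, Fin.elim0, Fin.elim0, Fin.elim0, Fin.elim0, nofun, nofun, nofun, by simp, by simp⟩

theorem abs_mem_nuclearSet_smul_rk1 {u : EuclideanSpace ℝ (Fin n₁)} {v : EuclideanSpace ℝ (Fin n₂)}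
    {w : EuclideanSpace ℝ (Fin n₃)} (hu : ‖u‖ = 1) (hv : ‖v‖ = 1) (hw : ‖w‖ = 1) (a : ℝ) :
    |a| ∈ nuclearSet (a • rk1 u v w) :=
  ⟨1, fun _ => a, fun _ => u, fun _ => v, fun _ => w, fun _ => hu, fun _ => hv, fun _ => hw,
    by simp, by simp⟩

theorem add_mem_nuclearSet {X Y : Tensor n₁ n₂ n₃} {s t : ℝ} (hs : s ∈ nuclearSet X)
    (ht : t ∈ nuclearSet Y) : s + t ∈ nuclearSet (X + Y) := by
  obtain ⟨r, c, u, v, w, hu, hv, hw, rfl, rfl⟩ := hs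
  obtain ⟨r', c', u', v', w', hu', hv', hw', rfl, rfl⟩ := ht
  refine ⟨r + r', Fin.append c c', Fin.append u u', Fin.append v v', Fin.append w w',
    fun ℓ => ?_, fun ℓ => ?_, fun ℓ => ?_, by simp [Fin.sum_univ_add],
    by simp [Fin.sum_univ_add]⟩ <;> cases ℓ using Fin.addCases <;> simp [*]

theorem sum_mem_nuclearSet {ι : Type*} (I : Finset ι) {s : ι → ℝ} {X : ι → Tensor n₁ n₂ n₃}
    (h : ∀ i ∈ I, s i ∈ nuclearSet (X i)) : ∑ i ∈ I, s i ∈ nuclearSet (∑ i ∈ I, X i) := by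
  induction I using Finset.cons_induction with
  | empty => simpa using zero_mem_nuclearSet_zero
  | cons i I hi ih =>
    rw [Finset.sum_cons, Finset.sum_cons]
    exact add_mem_nuclearSet (h i (Finset.mem_cons_self i I))
      (ih fun j hj => h j (Finset.mem_cons_of_mem hj))

theorem nuclearSet_nonempty (X : Tensor n₁ n₂ n₃) : (nuclearSet X).Nonempty := by
  classical
  refine ⟨∑ q, |X q|, ?_⟩
  have hX : X = ∑ q : Fin n₁ × Fin n₂ × Fin n₃,
      X q • rk1 (EuclideanSpace.single q.1 1) (EuclideanSpace.single q.2.1 1)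
        (EuclideanSpace.single q.2.2 1) := by
    simpa [rk1_single] using ((EuclideanSpace.basisFun _ ℝ).sum_repr X).symm
  have hunit : ∀ {n : ℕ} (i : Fin n), ‖EuclideanSpace.single i (1 : ℝ)‖ = 1 := fun i => by simp
  simpa only [← hX] using sum_mem_nuclearSet Finset.univ fun q _ =>
    abs_mem_nuclearSet_smul_rk1 (hunit q.1) (hunit q.2.1) (hunit q.2.2) (X q)

def unitRankOne (n₁ n₂ n₃ : ℕ) : Set (Tensor n₁ n₂ n₃) :=
  (fun θ => rk1 θ.1 θ.2.1 θ.2.2) ''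
    (Metric.sphere 0 1 ×ˢ Metric.sphere 0 1 ×ˢ Metric.sphere 0 1)

/-- Inserting `0` keeps the ball nonempty when some `nᵢ = 0` and there are no unit atoms. -/
def nuclearBall (n₁ n₂ n₃ : ℕ) : Set (Tensor n₁ n₂ n₃) :=
  convexHull ℝ (insert 0 (unitRankOne n₁ n₂ n₃))

theorem isCompact_nuclearBall : IsCompact (nuclearBall n₁ n₂ n₃) :=
  isCompact_convexHull <| ((isCompact_sphere _ _).prod ((isCompact_sphere _ _).prod
    (isCompact_sphere _ _))).image continuous_rk1 |>.insert 0

theorem zero_mem_nuclearBall : (0 : Tensor n₁ n₂ n₃) ∈ nuclearBall n₁ n₂ n₃ :=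
  subset_convexHull ℝ _ (Set.mem_insert 0 _)

theorem rk1_mem_nuclearBall {u : EuclideanSpace ℝ (Fin n₁)} {v : EuclideanSpace ℝ (Fin n₂)}
    {w : EuclideanSpace ℝ (Fin n₃)} (hu : ‖u‖ = 1) (hv : ‖v‖ = 1) (hw : ‖w‖ = 1) :
    rk1 u v w ∈ nuclearBall n₁ n₂ n₃ :=
  subset_convexHull ℝ _ <| Set.mem_insert_of_mem _
    ⟨(u, v, w), ⟨by simpa using hu, by simpa using hv, by simpa using hw⟩, rfl⟩

theorem exists_mem_nuclearSet_smul_le {k : Tensor n₁ n₂ n₃} (hk : k ∈ nuclearBall n₁ n₂ n₃)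
    {s : ℝ} (hs : 0 ≤ s) : ∃ t ∈ nuclearSet (s • k), t ≤ s := by
  suffices h : nuclearBall n₁ n₂ n₃ ⊆ {k | ∀ s : ℝ, 0 ≤ s → ∃ t ∈ nuclearSet (s • k), t ≤ s} from
    h hk s hs
  refine convexHull_min (Set.insert_subset
    (fun s hs => ⟨0, by simpa using zero_mem_nuclearSet_zero, hs⟩) ?_) ?_
  · rintro _ ⟨⟨u, v, w⟩, ⟨hu, hv, hw⟩, rfl⟩ s hs
    rw [mem_sphere_zero_iff_norm] at hu hv hw
    exact ⟨|s|, abs_mem_nuclearSet_smul_rk1 hu hv hw s, (abs_of_nonneg hs).le⟩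
  · intro k₁ hk₁ k₂ hk₂ a b ha hb hab s hs
    obtain ⟨t₁, ht₁, hts₁⟩ := hk₁ _ (mul_nonneg hs ha)
    obtain ⟨t₂, ht₂, hts₂⟩ := hk₂ _ (mul_nonneg hs hb)
    refine ⟨t₁ + t₂, ?_, by nlinarith⟩
    rw [smul_add, smul_smul, smul_smul]
    exact add_mem_nuclearSet ht₁ ht₂

theorem mem_smul_nuclearBall_of_mem_nuclearSet {X : Tensor n₁ n₂ n₃} {s : ℝ}
    (hs : s ∈ nuclearSet X) : X ∈ s • nuclearBall n₁ n₂ n₃ := by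
  obtain ⟨r, c, u, v, w, hu, hv, hw, rfl, rfl⟩ := hs
  have hatom : ∀ ℓ, ∃ z ∈ nuclearBall n₁ n₂ n₃, c ℓ • rk1 (u ℓ) (v ℓ) (w ℓ) = |c ℓ| • z := by
    intro ℓ
    rcases le_or_gt 0 (c ℓ) with hc | hc
    · exact ⟨_, rk1_mem_nuclearBall (hu ℓ) (hv ℓ) (hw ℓ), by rw [abs_of_nonneg hc]⟩
    · refine ⟨_, rk1_mem_nuclearBall (u := -u ℓ) (by rw [norm_neg, hu ℓ]) (hv ℓ) (hw ℓ), ?_⟩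
      rw [abs_of_neg hc, rk1_neg_left, neg_smul_neg]
  choose z hz hcz using hatom
  rw [Finset.sum_congr rfl fun ℓ _ => hcz ℓ]
  exact (convex_convexHull ℝ _).sum_smul_mem_sum_smul ⟨0, zero_mem_nuclearBall⟩ _
    (fun ℓ _ => abs_nonneg _) fun ℓ _ => hz ℓ

theorem exists_isLeast_nuclearSet (X : Tensor n₁ n₂ n₃) : ∃ t, IsLeast (nuclearSet X) t := by
  obtain ⟨s₀, hs₀⟩ := nuclearSet_nonempty X
  set P := {p : ℝ × Tensor n₁ n₂ n₃ | p.1 • p.2 = X} ∩ Set.Icc 0 s₀ ×ˢ nuclearBall n₁ n₂ n₃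
  have hP : IsCompact P := (isCompact_Icc.prod isCompact_nuclearBall).inter_left
    (isClosed_eq (by fun_prop) continuous_const)
  have hmemP : ∀ s ∈ nuclearSet X, s ≤ s₀ → ∃ k, (s, k) ∈ P := fun s hs hss₀ =>
    let ⟨k, hk, hkX⟩ := Set.mem_smul_set.1 (mem_smul_nuclearBall_of_mem_nuclearSet hs)
    ⟨k, hkX, ⟨nuclearSet_nonneg hs, hss₀⟩, hk⟩
  obtain ⟨k₀, hk₀⟩ := hmemP s₀ hs₀ le_rfl
  obtain ⟨p, ⟨hpX, ⟨hp0, hps₀⟩, hpK⟩, hp⟩ := hP.exists_isMinOn ⟨_, hk₀⟩ continuous_fst.continuousOn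
  obtain ⟨t, ht, htp⟩ := exists_mem_nuclearSet_smul_le hpK hp0
  rw [hpX] at ht
  refine ⟨t, ht, fun s hs => ?_⟩
  rcases le_or_gt s s₀ with hss₀ | hs₀s
  · obtain ⟨k, hk⟩ := hmemP s hs hss₀
    exact htp.trans (hp hk)
  · exact htp.trans (hps₀.trans hs₀s.le)

theorem nuclearNorm_mem_nuclearSet (X : Tensor n₁ n₂ n₃) : nuclearNorm X ∈ nuclearSet X := by
  obtain ⟨t, ht⟩ := exists_isLeast_nuclearSet X
  rw [nuclearNorm, ht.csInf_eq]
  exact ht.1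

theorem nuclearNorm_le_of_mem {X : Tensor n₁ n₂ n₃} {s : ℝ} (hs : s ∈ nuclearSet X) :
    nuclearNorm X ≤ s :=
  csInf_le ⟨0, fun _ => nuclearSet_nonneg⟩ hs

theorem nuclearNorm_nonneg (X : Tensor n₁ n₂ n₃) : 0 ≤ nuclearNorm X :=
  nuclearSet_nonneg (nuclearNorm_mem_nuclearSet X)

theorem nuclearNorm_zero : nuclearNorm (0 : Tensor n₁ n₂ n₃) = 0 :=
  (nuclearNorm_le_of_mem zero_mem_nuclearSet_zero).antisymm (nuclearNorm_nonneg 0)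

theorem nuclearNorm_smul_le {k : Tensor n₁ n₂ n₃} (hk : k ∈ nuclearBall n₁ n₂ n₃) {s : ℝ}
    (hs : 0 ≤ s) : nuclearNorm (s • k) ≤ s :=
  let ⟨_, ht, hts⟩ := exists_mem_nuclearSet_smul_le hk hs
  (nuclearNorm_le_of_mem ht).trans hts

theorem exists_injective_decomp_le {X : Tensor n₁ n₂ n₃} {s : ℝ} (hs : s ∈ nuclearSet X) :
    ∃ (r : ℕ) (c : Fin r → ℝ) (u : Fin r → EuclideanSpace ℝ (Fin n₁))
      (v : Fin r → EuclideanSpace ℝ (Fin n₂)) (w : Fin r → EuclideanSpace ℝ (Fin n₃)),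
      (∀ ℓ, ‖u ℓ‖ = 1) ∧ (∀ ℓ, ‖v ℓ‖ = 1) ∧ (∀ ℓ, ‖w ℓ‖ = 1) ∧
      (Function.Injective fun ℓ => (u ℓ, v ℓ, w ℓ)) ∧
      X = ∑ ℓ, c ℓ • rk1 (u ℓ) (v ℓ) (w ℓ) ∧ ∑ ℓ, |c ℓ| ≤ s := by
  obtain ⟨r, c, u, v, w, hu, hv, hw, rfl, rfl⟩ := hs
  obtain ⟨r', c', θ, hθ, hθr, hsum, habs⟩ :=
    exists_injective_sum_smul_eq c (fun ℓ => (u ℓ, v ℓ, w ℓ)) fun θ => rk1 θ.1 θ.2.1 θ.2.2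
  have hatom : ∀ j, ‖(θ j).1‖ = 1 ∧ ‖(θ j).2.1‖ = 1 ∧ ‖(θ j).2.2‖ = 1 := fun j => by
    obtain ⟨ℓ, hℓ⟩ := hθr j
    exact hℓ ▸ ⟨hu ℓ, hv ℓ, hw ℓ⟩
  exact ⟨r', c', fun j => (θ j).1, fun j => (θ j).2.1, fun j => (θ j).2.2, fun j => (hatom j).1,
    fun j => (hatom j).2.1, fun j => (hatom j).2.2, hθ, hsum.symm, habs⟩

section Objectives

variable (A : Tensor n₁ n₂ n₃ →ₗ[ℝ] EuclideanSpace ℝ (Fin m)) (y : EuclideanSpace ℝ (Fin m))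
  {lam : ℝ}

theorem fobj_sum_le_phiVal (hlam : 0 ≤ lam) {r : ℕ} {c : Fin r → ℝ}
    {u : Fin r → EuclideanSpace ℝ (Fin n₁)} {v : Fin r → EuclideanSpace ℝ (Fin n₂)}
    {w : Fin r → EuclideanSpace ℝ (Fin n₃)} (hu : ∀ ℓ, ‖u ℓ‖ = 1) (hv : ∀ ℓ, ‖v ℓ‖ = 1)
    (hw : ∀ ℓ, ‖w ℓ‖ = 1) :
    Fobj A y lam (∑ ℓ, c ℓ • rk1 (u ℓ) (v ℓ) (w ℓ)) ≤ PhiVal A y lam c u v w := by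
  unfold Fobj PhiVal
  gcongr
  exact nuclearNorm_le_of_mem ⟨r, c, u, v, w, hu, hv, hw, rfl, rfl⟩

theorem exists_fobj_le_of_mem_phiSet (hlam : 0 ≤ lam) {t : ℝ} (ht : t ∈ PhiSet A y lam) :
    ∃ X, Fobj A y lam X ≤ t := by
  obtain ⟨r, c, u, v, w, hu, hv, hw, -, rfl⟩ := ht
  exact ⟨_, fobj_sum_le_phiVal A y hlam hu hv hw⟩

theorem exists_phiVal_le_fobj (hlam : 0 ≤ lam) (X : Tensor n₁ n₂ n₃) :
    ∃ (r : ℕ) (c : Fin r → ℝ) (u : Fin r → EuclideanSpace ℝ (Fin n₁))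
      (v : Fin r → EuclideanSpace ℝ (Fin n₂)) (w : Fin r → EuclideanSpace ℝ (Fin n₃)),
      (∀ ℓ, ‖u ℓ‖ = 1) ∧ (∀ ℓ, ‖v ℓ‖ = 1) ∧ (∀ ℓ, ‖w ℓ‖ = 1) ∧
      (Function.Injective fun ℓ => (u ℓ, v ℓ, w ℓ)) ∧
      X = ∑ ℓ, c ℓ • rk1 (u ℓ) (v ℓ) (w ℓ) ∧ PhiVal A y lam c u v w ≤ Fobj A y lam X := by
  obtain ⟨r, c, u, v, w, hu, hv, hw, hinj, hX, hle⟩ :=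
    exists_injective_decomp_le (nuclearNorm_mem_nuclearSet X)
  refine ⟨r, c, u, v, w, hu, hv, hw, hinj, hX, ?_⟩
  unfold PhiVal Fobj
  rw [← hX]
  gcongr

theorem exists_forall_fobj_le (hlam : 0 < lam) : ∃ X, ∀ Z, Fobj A y lam X ≤ Fobj A y lam Z := by
  set R := Fobj A y lam 0 / lam
  let G : ℝ × Tensor n₁ n₂ n₃ → ℝ := fun p => 1 / 2 * ‖y - A (p.1 • p.2)‖ ^ 2 + lam * p.1
  have hG0 : G (0, 0) = lam * R := by
    simp [G, R, Fobj, nuclearNorm_zero, mul_div_cancel₀ _ hlam.ne']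
  have hR : 0 ≤ R := by unfold R Fobj; rw [nuclearNorm_zero]; positivity
  have hA : Continuous A := A.continuous_of_finiteDimensional
  obtain ⟨p, ⟨⟨hp0, -⟩, hpK⟩, hp⟩ := (isCompact_Icc.prod isCompact_nuclearBall).exists_isMinOn
    ⟨(0, 0), ⟨le_rfl, hR⟩, zero_mem_nuclearBall⟩ (by fun_prop : Continuous G).continuousOn
  have hFp : Fobj A y lam (p.1 • p.2) ≤ G p := by
    simp only [Fobj, G]
    gcongr
    exact nuclearNorm_smul_le hpK hp0
  refine ⟨p.1 • p.2, fun Z => hFp.trans ?_⟩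
  obtain ⟨k, hk, hkZ⟩ := Set.mem_smul_set.1 <|
    mem_smul_nuclearBall_of_mem_nuclearSet (nuclearNorm_mem_nuclearSet Z)
  -- beyond `R` the penalty alone exceeds `F(0) = G(0, 0)`
  rcases le_or_gt (nuclearNorm Z) R with hZR | hRZ
  · calc G p ≤ G (nuclearNorm Z, k) := hp ⟨⟨nuclearNorm_nonneg Z, hZR⟩, hk⟩
      _ = Fobj A y lam Z := by simp only [G, Fobj, hkZ]
  · calc G p ≤ G (0, 0) := hp ⟨⟨le_rfl, hR⟩, zero_mem_nuclearBall⟩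
      _ ≤ lam * nuclearNorm Z := hG0 ▸ by gcongr
      _ ≤ Fobj A y lam Z := le_add_of_nonneg_left (by positivity)

end Objectives

/-- equivalence of the (discrete-measure) BLasso problem and
nuclear-norm regularization: `inf Φ = min F`; every minimizer `μ*` of `Φ` yields the
minimizer `X* = D(μ*)` of `F`; and every minimizer `X*` of `F` is represented by a
finitely supported minimizer `μ*` of `Φ`. -/
theorem blasso_nuclear_equivalence
    (A : Tensor n₁ n₂ n₃ →ₗ[ℝ] EuclideanSpace ℝ (Fin m))
    (y : EuclideanSpace ℝ (Fin m)) (lam : ℝ) (hlam : 0 < lam) :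
    sInf (PhiSet A y lam) = sInf (Set.range (Fobj A y lam)) ∧
    (∃ Xstar : Tensor n₁ n₂ n₃, ∀ Z, Fobj A y lam Xstar ≤ Fobj A y lam Z) ∧
    (∀ (r : ℕ) (c : Fin r → ℝ) (u : Fin r → EuclideanSpace ℝ (Fin n₁))
      (v : Fin r → EuclideanSpace ℝ (Fin n₂)) (w : Fin r → EuclideanSpace ℝ (Fin n₃)),
      (∀ ℓ, ‖u ℓ‖ = 1) → (∀ ℓ, ‖v ℓ‖ = 1) → (∀ ℓ, ‖w ℓ‖ = 1) →
      (Function.Injective fun ℓ => (u ℓ, v ℓ, w ℓ)) →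
      (∀ t ∈ PhiSet A y lam, PhiVal A y lam c u v w ≤ t) →
      ∀ Z, Fobj A y lam (∑ ℓ, c ℓ • rk1 (u ℓ) (v ℓ) (w ℓ)) ≤ Fobj A y lam Z) ∧
    (∀ Xstar : Tensor n₁ n₂ n₃, (∀ Z, Fobj A y lam Xstar ≤ Fobj A y lam Z) →
      ∃ (r : ℕ) (c : Fin r → ℝ) (u : Fin r → EuclideanSpace ℝ (Fin n₁))
        (v : Fin r → EuclideanSpace ℝ (Fin n₂)) (w : Fin r → EuclideanSpace ℝ (Fin n₃)),
        (∀ ℓ, ‖u ℓ‖ = 1) ∧ (∀ ℓ, ‖v ℓ‖ = 1) ∧ (∀ ℓ, ‖w ℓ‖ = 1) ∧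
        (Function.Injective fun ℓ => (u ℓ, v ℓ, w ℓ)) ∧
        Xstar = ∑ ℓ, c ℓ • rk1 (u ℓ) (v ℓ) (w ℓ) ∧
        (∀ t ∈ PhiSet A y lam, PhiVal A y lam c u v w ≤ t)) := by
  obtain ⟨Xs, hXs⟩ := exists_forall_fobj_le A y hlam
  have hF_le : ∀ X, (∀ Z, Fobj A y lam X ≤ Fobj A y lam Z) → ∀ t ∈ PhiSet A y lam,
      Fobj A y lam X ≤ t := fun X hX t ht =>
    let ⟨Z, hZ⟩ := exists_fobj_le_of_mem_phiSet A y hlam.le ht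
    (hX Z).trans hZ
  obtain ⟨r, c, u, v, w, hu, hv, hw, hinj, -, hPhi_le⟩ := exists_phiVal_le_fobj A y hlam.le Xs
  have hPhi_mem : PhiVal A y lam c u v w ∈ PhiSet A y lam := ⟨r, c, u, v, w, hu, hv, hw, hinj, rfl⟩
  refine ⟨?_, ⟨Xs, hXs⟩, ?_, fun X hX => ?_⟩
  · have hPhi_least : IsLeast (PhiSet A y lam) (Fobj A y lam Xs) :=
      ⟨(hPhi_le.antisymm (hF_le Xs hXs _ hPhi_mem)) ▸ hPhi_mem, hF_le Xs hXs⟩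
    have hF_least : IsLeast (Set.range (Fobj A y lam)) (Fobj A y lam Xs) :=
      ⟨⟨Xs, rfl⟩, Set.forall_mem_range.2 hXs⟩
    rw [hPhi_least.csInf_eq, hF_least.csInf_eq]
  · intro r' c' u' v' w' hu' hv' hw' _ hmin Z
    calc Fobj A y lam (∑ ℓ, c' ℓ • rk1 (u' ℓ) (v' ℓ) (w' ℓ)) ≤ PhiVal A y lam c' u' v' w' :=
          fobj_sum_le_phiVal A y hlam.le hu' hv' hw'
      _ ≤ PhiVal A y lam c u v w := hmin _ hPhi_mem
      _ ≤ Fobj A y lam Z := hPhi_le.trans (hXs Z)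
  · obtain ⟨r', c', u', v', w', hu', hv', hw', hinj', hX_eq, hle⟩ :=
      exists_phiVal_le_fobj A y hlam.le X
    exact ⟨r', c', u', v', w', hu', hv', hw', hinj', hX_eq, fun t ht => hle.trans (hF_le X hX t ht)⟩
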